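/- arXiv:2101.10924 — 2 statements merged into one kernel-verified Lean document; each statement's English description precedes it below -/
import Mathlib

section
/- With the same setup (w(u) solving w^{r+1}/(r(r+1)) − w/r + 1/(r+1) = u²/2, C_n(r,j) defined by (w^{j+1}−1)/(j+1) = Σ_{n≥0} C_n(r,j)u^{n+1}, and f_j(T) = Σ_{k≥0}(2k+1)!! C_{2k}(r,j)(−T)^k), the identity f_{j+r}(T) = f_j(T) − r·j·T·f_{j-1}(T) holds in ℚ[r,j][[T]]. -/
noncomputable section

/-- The field `ℚ(r,j)` of rational functions in the two formal variables `r`, `j`. -/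
abbrev KK : Type := FractionRing (MvPolynomial (Fin 2) ℚ)

/-- The formal variable `r` as an element of `ℚ(r,j)`. -/
def Rv : KK := algebraMap (MvPolynomial (Fin 2) ℚ) KK (MvPolynomial.X 0)

/-- The formal variable `j` as an element of `ℚ(r,j)`. -/
def Jv : KK := algebraMap (MvPolynomial (Fin 2) ℚ) KK (MvPolynomial.X 1)

/-- Generalized binomial coefficient `binom(a,k) = a(a-1)⋯(a-k+1)/k!`. -/
def gbinom (a : KK) (k : ℕ) : KK :=
  (∏ i ∈ Finset.range k, (a - (i : KK))) / (k.factorial : KK)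

/-- The binomial-series power `(1+v)^a = Σ_k binom(a,k) v^k`, well defined as a power
series when `v` has zero constant term. -/
def bpow (a : KK) (v : PowerSeries KK) : PowerSeries KK :=
  PowerSeries.mk fun n =>
    ∑ k ∈ Finset.range (n + 1), gbinom a k * PowerSeries.coeff (R := KK) n (v ^ k)

/-- `isW ρ w` says that `w = w(u) ∈ 1 + u + u²·[[u]]` solves
`w^{ρ+1}/(ρ(ρ+1)) - w/ρ + 1/(ρ+1) = u²/2`, where `w^{ρ+1}` is the binomial series
`(1 + (w-1))^{ρ+1}`. -/
def isW (ρ : KK) (w : PowerSeries KK) : Prop :=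
  PowerSeries.coeff (R := KK) 0 w = 1 ∧ PowerSeries.coeff (R := KK) 1 w = 1 ∧
    PowerSeries.C (R := KK) (ρ * (ρ + 1))⁻¹ * bpow (ρ + 1) (w - 1)
        - PowerSeries.C (R := KK) ρ⁻¹ * w + PowerSeries.C (R := KK) (ρ + 1)⁻¹
      = PowerSeries.C (R := KK) (2 : KK)⁻¹ * PowerSeries.X ^ 2

/-- `Cco a w n` is the coefficient `C_n(r,a)`: the coefficient of `u^{n+1}` in
`(w^{a+1} - 1)/(a+1)`. -/
def Cco (a : KK) (w : PowerSeries KK) (n : ℕ) : KK :=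
  (a + 1)⁻¹ * PowerSeries.coeff (R := KK) (n + 1) (bpow (a + 1) (w - 1) - 1)

/-- `fT a w` is the series `f_a(T) = Σ_{k≥0} (2k+1)!! C_{2k}(r,a) (-T)^k`. -/
def fT (a : KK) (w : PowerSeries KK) : PowerSeries KK :=
  PowerSeries.mk fun k =>
    (Nat.doubleFactorial (2 * k + 1) : KK) * Cco a w (2 * k) * (-1) ^ k

/-- The formal derivative `d/dT` of a power series. -/
def psDeriv (f : PowerSeries KK) : PowerSeries KK :=
  PowerSeries.mk fun n => ((n : KK) + 1) * PowerSeries.coeff (R := KK) (n + 1) f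

/-!
Write `w^a` for the binomial series `bpow a (w - 1)`; it is `(1 + X)^a` substituted into `w - 1`,
so `w^{a+b} = w^a w^b` and the chain rule `(w^a)' = a w^{a-1} w'` hold. Differentiating the equation
of `w` gives `(w^r - 1) w' = r u`, and `((w^{a+1} - 1)/(a+1))' = w^a w'`. Hence the generating
series of `C_n(r, j+r) - C_n(r, j)` has derivative `w^j (w^r - 1) w' = r u w^j`, whose coefficient
of `u^{n+1}` is `r j C_n(r, j-1)`. At `u^{2k+2}` this reads
`(2k+3)(C_{2k+2}(r, j+r) - C_{2k+2}(r, j)) = r j C_{2k}(r, j-1)`, and `(2k+3)!! = (2k+3)(2k+1)!!`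
turns it into the coefficient of `T^{k+1}` in the claim.
-/

open PowerSeries

namespace PowerSeries

variable {R : Type*} [CommRing R]

theorem derivative_C_mul (c : R) (f : R⟦X⟧) : d⁄dX R (C c * f) = C c * d⁄dX R f := by
  rw [← smul_eq_C_mul, ← smul_eq_C_mul, Derivation.map_smul]

theorem coeff_pow_eq_zero_of_lt {v : R⟦X⟧} (hv : constantCoeff v = 0) {n k : ℕ} (h : n < k) :
    coeff n (v ^ k) = 0 :=
  coeff_of_lt_order _ ((Nat.cast_lt.mpr h).trans_le (le_order_pow_of_constantCoeff_eq_zero k hv))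

theorem derivative_binomialSeries [BinomialRing R] (r : R) :
    d⁄dX R (binomialSeries R r) = r • binomialSeries R (r - 1) := by
  ext n
  have h := Ring.choose_smul_choose r (n := n + 1) (k := 1) (by omega)
  simp only [Nat.choose_one_right, Ring.choose_one_right, Nat.add_sub_cancel, nsmul_eq_mul] at h
  push_cast at h
  simp [coeff_derivative, ← h, mul_comm]

end PowerSeries

theorem gbinom_eq_choose (a : KK) (k : ℕ) : gbinom a k = Ring.choose a k := by
  have h := Ring.descPochhammer_eq_factorial_smul_choose a k
  rw [← Polynomial.eval₂_smulOneHom_eq_smeval,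
    Subsingleton.elim RingHom.smulOneHom (Int.castRingHom KK), ← Polynomial.eval_map,
    descPochhammer_map, descPochhammer_eval_eq_prod_range] at h
  rw [gbinom, div_eq_iff (Nat.cast_ne_zero.mpr k.factorial_ne_zero), mul_comm, ← nsmul_eq_mul, h]

section BinomialPower

variable {v : KK⟦X⟧}

theorem bpow_eq_subst (a : KK) (hv : constantCoeff v = 0) :
    bpow a v = (PowerSeries.binomialSeries KK a).subst v := by
  ext n
  rw [coeff_subst' (HasSubst.of_constantCoeff_zero' hv), bpow, coeff_mk,
    finsum_eq_sum_of_support_subset (s := Finset.range (n + 1))]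
  · simp [gbinom_eq_choose]
  · intro d hd
    by_contra hdn
    simp only [Finset.coe_range, Set.mem_Iio, not_lt] at hdn
    exact hd (by simp [coeff_pow_eq_zero_of_lt hv (by omega : n < d)])

theorem bpow_add (a b : KK) (hv : constantCoeff v = 0) : bpow (a + b) v = bpow a v * bpow b v := by
  simp only [bpow_eq_subst _ hv, binomialSeries_add, subst_mul (HasSubst.of_constantCoeff_zero' hv)]

theorem derivative_bpow (a : KK) (hv : constantCoeff v = 0) :
    d⁄dX KK (bpow a v) = C a * bpow (a - 1) v * d⁄dX KK v := by
  have hs := HasSubst.of_constantCoeff_zero' hv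
  rw [bpow_eq_subst _ hv, bpow_eq_subst _ hv, derivative_subst hs, derivative_binomialSeries,
    subst_smul hs, smul_eq_C_mul]

theorem constantCoeff_bpow (a : KK) : constantCoeff (bpow a v) = 1 := by
  rw [← coeff_zero_eq_constantCoeff_apply]
  simp [bpow, gbinom]

end BinomialPower

section Coefficients

variable {w : KK⟦X⟧} {a : KK}

theorem constantCoeff_sub_one (hw0 : coeff 0 w = 1) : constantCoeff (w - 1) = 0 := by
  rw [map_sub, ← coeff_zero_eq_constantCoeff_apply, hw0, map_one, sub_self]

theorem coeff_succ_bpow (ha : a ≠ 0) (n : ℕ) :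
    coeff (n + 1) (bpow a (w - 1)) = a * Cco (a - 1) w n := by
  simp [Cco, ha]

theorem coeff_bpow_mul_derivative (hw0 : coeff 0 w = 1) (ha : a + 1 ≠ 0) (n : ℕ) :
    coeff n (bpow a (w - 1) * d⁄dX KK w) = (n + 1) * Cco a w n := by
  have h : bpow a (w - 1) * d⁄dX KK w = C (a + 1)⁻¹ * d⁄dX KK (bpow (a + 1) (w - 1) - 1) := by
    rw [map_sub, Derivation.map_one_eq_zero, sub_zero, derivative_bpow _ (constantCoeff_sub_one hw0),
      add_sub_cancel_right, map_sub, Derivation.map_one_eq_zero, sub_zero, ← mul_assoc, ← mul_assoc,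
      ← map_mul, inv_mul_cancel₀ ha, map_one, one_mul]
  rw [h, coeff_C_mul, coeff_derivative, Cco]
  ring

theorem Cco_zero (hw0 : coeff 0 w = 1) (hw1 : coeff 1 w = 1) (ha : a + 1 ≠ 0) : Cco a w 0 = 1 := by
  have h := coeff_bpow_mul_derivative hw0 ha 0
  rw [coeff_zero_eq_constantCoeff, map_mul, constantCoeff_bpow,
    ← coeff_zero_eq_constantCoeff_apply, coeff_derivative, hw1] at h
  simpa using h.symm

end Coefficients

namespace isW

variable {w : KK⟦X⟧} {a ρ : KK}

theorem bpow_sub_one_mul_derivative (hw : isW ρ w) (hρ : ρ ≠ 0) (hρ1 : ρ + 1 ≠ 0) :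
    (bpow ρ (w - 1) - 1) * d⁄dX KK w = C ρ * X := by
  obtain ⟨hw0, -, heq⟩ := hw
  have h := congrArg (d⁄dX KK) heq
  simp only [map_add, map_sub, derivative_C_mul, derivative_bpow _ (constantCoeff_sub_one hw0),
    derivative_C, derivative_pow, derivative_X, Derivation.map_one_eq_zero, add_sub_cancel_right,
    sub_zero, add_zero, mul_one] at h
  have e1 : C ρ * C (ρ * (ρ + 1))⁻¹ * (C ρ + C 1) = 1 := by
    rw [← map_add, ← map_mul, ← map_mul, ← map_one C]
    congr 1
    field_simp
  have e2 : C ρ * C ρ⁻¹ = 1 := by rw [← map_mul, mul_inv_cancel₀ hρ, map_one]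
  have e3 : C (2 : KK)⁻¹ * (2 : ℕ) = 1 := by rw [← map_natCast C, ← map_mul]; norm_num
  linear_combination C ρ * h - bpow ρ (w - 1) * d⁄dX KK w * e1 + d⁄dX KK w * e2 + C ρ * X * e3

theorem bpow_add_mul_derivative_sub (hw : isW ρ w) (hρ : ρ ≠ 0) (hρ1 : ρ + 1 ≠ 0) :
    bpow (a + ρ) (w - 1) * d⁄dX KK w - bpow a (w - 1) * d⁄dX KK w = C ρ * X * bpow a (w - 1) := by
  rw [bpow_add _ _ (constantCoeff_sub_one hw.1)]
  linear_combination bpow a (w - 1) * hw.bpow_sub_one_mul_derivative hρ hρ1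

theorem Cco_add_sub_Cco (hw : isW ρ w) (hρ : ρ ≠ 0) (hρ1 : ρ + 1 ≠ 0) (ha : a ≠ 0)
    (ha1 : a + 1 ≠ 0) (haρ : a + ρ + 1 ≠ 0) (n : ℕ) :
    (n + 3) * (Cco (a + ρ) w (n + 2) - Cco a w (n + 2)) = ρ * a * Cco (a - 1) w n := by
  have h := congrArg (coeff (n + 2)) (hw.bpow_add_mul_derivative_sub (a := a) hρ hρ1)
  rw [map_sub, coeff_bpow_mul_derivative hw.1 haρ, coeff_bpow_mul_derivative hw.1 ha1, mul_assoc,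
    coeff_C_mul, coeff_succ_X_mul, coeff_succ_bpow ha] at h
  push_cast at h
  linear_combination h

theorem fT_add (hw : isW ρ w) (hρ : ρ ≠ 0) (hρ1 : ρ + 1 ≠ 0) (ha : a ≠ 0) (ha1 : a + 1 ≠ 0)
    (haρ : a + ρ + 1 ≠ 0) :
    fT (a + ρ) w = fT a w - C (ρ * a) * X * fT (a - 1) w := by
  ext (_ | m)
  · simp [fT, Cco_zero hw.1 hw.2.1 ha1, Cco_zero hw.1 hw.2.1 haρ]
  · have hdf : ((2 * m + 2 + 1).doubleFactorial : KK) =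
        (2 * m + 3) * (2 * m + 1).doubleFactorial := by
      rw [Nat.doubleFactorial_add_two]
      push_cast
      ring
    have hC := hw.Cco_add_sub_Cco hρ hρ1 ha ha1 haρ (2 * m)
    push_cast at hC
    rw [map_sub, mul_assoc, coeff_C_mul, coeff_succ_X_mul]
    simp only [fT, coeff_mk, Nat.mul_succ, hdf, pow_succ]
    linear_combination -(-1) ^ m * ((2 * m + 1).doubleFactorial : KK) * hC

end isW

theorem algebraMap_ne_zero_of_eval_ne_zero {p : MvPolynomial (Fin 2) ℚ} (x : Fin 2 → ℚ)
    (h : MvPolynomial.eval x p ≠ 0) : algebraMap (MvPolynomial (Fin 2) ℚ) KK p ≠ 0 := by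
  rw [ne_eq, IsFractionRing.to_map_eq_zero_iff]
  rintro rfl
  exact h (map_zero _)

/-- The identity `f_{j+r}(T) = f_j(T) - r·j·T·f_{j-1}(T)` in `ℚ(r,j)[[T]]`, where
`f_a(T) = Σ_k (2k+1)!! C_{2k}(r,a)(-T)^k` and the `C_n(r,a)` come from the solution `w`
of `w^{r+1}/(r(r+1)) - w/r + 1/(r+1) = u²/2`. -/
theorem stmt4 (w : PowerSeries KK) (hw : isW Rv w) :
    fT (Jv + Rv) w
      = fT Jv w - PowerSeries.C (R := KK) (Rv * Jv) * PowerSeries.X * fT (Jv - 1) w := by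
  have hne {p : MvPolynomial (Fin 2) ℚ} (h : MvPolynomial.eval 1 p ≠ 0) :=
    algebraMap_ne_zero_of_eval_ne_zero 1 h
  refine hw.fT_add ?_ ?_ ?_ ?_ ?_
  · simp [Rv]
  · simpa [Rv] using hne (p := .X 0 + 1) (by norm_num)
  · simp [Jv]
  · simpa [Jv] using hne (p := .X 1 + 1) (by norm_num)
  · simpa [Jv, Rv] using hne (p := .X 1 + .X 0 + 1) (by norm_num)

end
end

section
/- Let r be an even positive integer and let t, y be related by t/y = Z − Z^{−1} and t^r·(Z^{r+1} − Z^{−r−1})/(r+1) = (Z − Z^{−1})^{r+1} for an auxiliary variable Z. Then y satisfies the algebraic equation Σ_{j=0}^{r/2} (1/(2j+1))·binom(j + r/2, 2j)·y^{r−2j}·t^{2j} = 1, and this equation has a unique power series solution y(t) ∈ 1 + t²ℚ[[t²]], beginning y(t) = 1 − ((r+2)/24)t² + ((r+2)(r−6)(2r+1)/5760)t⁴ + O(t⁶). -/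
/-!
Write `u = Z - Z⁻¹`. The differences `a_m = Z^{2m+1} - Z^{-(2m+1)}` satisfy
`a_{m+2} = (u² + 2) a_{m+1} - a_m`, and so do the sums `∑_j d(m,j) u^{2j+1}` with
`d(m,j) = (2m+1)/(2j+1) · binom(m+j,2j)` by Pascal's rule; hence the two agree. Substituting
`t = u y` into the second relation and dividing by `u^{2m+1}` gives the equation for `y`.

As a polynomial in `y` over `ℚ⟦t⟧` the equation is monic, and `y = 1` is a simple root
modulo `t` (the derivative there is `r`), so Hensel's lemma in the `t`-adically complete local
ring `ℚ⟦t⟧` gives exactly one root with constant term `1`. Only `t²` occurs in the equation,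
so `y(-t)` is a root as well and uniqueness forces `y` to be even. Comparing the coefficients of
`t²` and `t⁴` gives the first two Taylor coefficients.
-/

/-- `isSolD r y` says that `y ∈ 1 + t²ℚ[[t²]]` and `y` solves
`Σ_{j=0}^{r/2} (1/(2j+1))·binom(j+r/2,2j)·y^{r-2j}·t^{2j} = 1`. -/
def isSolD (r : ℕ) (y : PowerSeries ℚ) : Prop :=
  PowerSeries.coeff (R := ℚ) 0 y = 1 ∧ (∀ n : ℕ, Odd n → PowerSeries.coeff (R := ℚ) n y = 0) ∧
    ∑ j ∈ Finset.range (r / 2 + 1),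
        PowerSeries.C (R := ℚ) ((Nat.choose (j + r / 2) (2 * j) : ℚ) / (2 * (j : ℚ) + 1))
          * y ^ (r - 2 * j) * PowerSeries.X ^ (2 * j)
      = 1

open Finset PowerSeries

/-- `lucasCoeff m j = (2m+1)/(2j+1) · binom(m+j, 2j)` (see `lucasCoeff_mul`) is the coefficient of
`u^{2j+1}` in the Lucas polynomial `L_{2m+1}(u)`; written as a sum of two binomial coefficients it
needs no division and obeys Pascal-type recurrences. -/
def lucasCoeff (m j : ℕ) : ℕ := (m + j + 1).choose (2 * j + 1) + (m + j).choose (2 * j + 1)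

lemma lucasCoeff_zero_right (m : ℕ) : lucasCoeff m 0 = 2 * m + 1 := by
  simp [lucasCoeff]; ring

lemma lucasCoeff_eq_zero_of_lt {m j : ℕ} (h : m < j) : lucasCoeff m j = 0 := by
  simp only [lucasCoeff, Nat.add_eq_zero_iff]
  constructor <;> exact Nat.choose_eq_zero_of_lt (by omega)

lemma choose_add_three_add_choose (n k : ℕ) :
    (n + 3).choose (k + 2) + (n + 1).choose (k + 2)
      = (n + 1).choose k + 2 * (n + 2).choose (k + 2) := by
  simp only [Nat.choose_succ_succ']
  ring

lemma lucasCoeff_add_two_add_one (m j : ℕ) :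
    lucasCoeff (m + 2) (j + 1) + lucasCoeff m (j + 1)
      = lucasCoeff (m + 1) j + 2 * lucasCoeff (m + 1) (j + 1) := by
  have h₁ := choose_add_three_add_choose (m + j + 1) (2 * j + 1)
  have h₂ := choose_add_three_add_choose (m + j) (2 * j + 1)
  simp only [lucasCoeff]
  ring_nf at h₁ h₂ ⊢
  omega

lemma lucasCoeff_mul (m j : ℕ) (h : j ≤ m) :
    lucasCoeff m j * (2 * j + 1) = (2 * m + 1) * (j + m).choose (2 * j) := by
  have h₁ := Nat.add_one_mul_choose_eq (m + j) (2 * j)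
  have h₂ := Nat.choose_succ_right_eq (m + j) (2 * j)
  rw [show j + m = m + j by ring]
  simp only [lucasCoeff]
  rw [add_mul, ← h₁, h₂, show m + j - 2 * j = m - j by omega]
  zify [h]
  ring

lemma sum_range_lucasCoeff_of_lt {R : Type*} [CommRing R] (u : R) {m N : ℕ} (h : m < N) :
    ∑ j ∈ range N, (lucasCoeff m j : R) * u ^ (2 * j + 1)
      = ∑ j ∈ range (m + 1), (lucasCoeff m j : R) * u ^ (2 * j + 1) :=
  (sum_subset (range_subset_range.2 (by omega)) fun j _ hj => by
    rw [lucasCoeff_eq_zero_of_lt (by simpa using hj), Nat.cast_zero, zero_mul]).symm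

theorem sum_lucasCoeff_mul_sub_pow {R : Type*} [CommRing R] {x y : R} (hxy : x * y = 1) (m : ℕ) :
    ∑ j ∈ range (m + 1), (lucasCoeff m j : R) * (x - y) ^ (2 * j + 1)
      = x ^ (2 * m + 1) - y ^ (2 * m + 1) := by
  set u := x - y
  suffices ∀ N, m < N → ∑ j ∈ range N, (lucasCoeff m j : R) * u ^ (2 * j + 1)
      = x ^ (2 * m + 1) - y ^ (2 * m + 1) from this _ m.lt_succ_self
  induction m using Nat.twoStepInduction with
  | zero =>
    intro N hN
    rw [sum_range_lucasCoeff_of_lt u hN]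
    simp [lucasCoeff_zero_right, u]
  | one =>
    intro N hN
    rw [sum_range_lucasCoeff_of_lt u hN]
    simp [sum_range_succ, lucasCoeff, u]
    linear_combination (-(3 : R) * x + 3 * y) * hxy
  | more m ih₀ ih₁ =>
    rintro (_ | N) hN
    · omega
    have hcoeff : ∀ j ∈ range N,
        ((lucasCoeff (m + 2) (j + 1) : R) + lucasCoeff m (j + 1)) * u ^ (2 * (j + 1) + 1)
          = u ^ 2 * ((lucasCoeff (m + 1) j : R) * u ^ (2 * j + 1))
            + 2 * ((lucasCoeff (m + 1) (j + 1) : R) * u ^ (2 * (j + 1) + 1)) := fun j _ => by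
      rw [← Nat.cast_add, lucasCoeff_add_two_add_one]
      push_cast
      ring
    have hsum := sum_congr rfl hcoeff
    simp only [add_mul, sum_add_distrib, ← mul_sum] at hsum
    have hrec : x ^ (2 * (m + 2) + 1) - y ^ (2 * (m + 2) + 1)
        = (u ^ 2 + 2) * (x ^ (2 * (m + 1) + 1) - y ^ (2 * (m + 1) + 1))
          - (x ^ (2 * m + 1) - y ^ (2 * m + 1)) := by
      linear_combination (2 * (x ^ (2 * m + 3) - y ^ (2 * m + 3))
        - (1 + x * y) * (x ^ (2 * m + 1) - y ^ (2 * m + 1))) * hxy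
    have h₀ := ih₀ (N + 1) (by omega)
    have h₁ := ih₁ (N + 1) (by omega)
    rw [sum_range_succ'] at h₀ h₁ ⊢
    rw [ih₁ N (by omega)] at hsum
    simp only [lucasCoeff_zero_right] at h₀ h₁ ⊢
    push_cast at h₀ h₁ ⊢
    linear_combination hsum - h₀ + 2 * h₁ - hrec

theorem sum_choose_mul_pow_mul_pow_eq_one {K : Type*} [Field K] [CharZero K] (m : ℕ) {t y Z : K}
    (hu : Z - Z⁻¹ ≠ 0) (hty : t / y = Z - Z⁻¹)
    (hrel : t ^ (2 * m) * (Z ^ (2 * m + 1) - Z⁻¹ ^ (2 * m + 1)) / (((2 * m : ℕ) : K) + 1)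
      = (Z - Z⁻¹) ^ (2 * m + 1)) :
    ∑ j ∈ range (m + 1),
      1 / (2 * (j : K) + 1) * ((j + m).choose (2 * j) : K) * y ^ (2 * m - 2 * j) * t ^ (2 * j)
        = 1 := by
  have hZ : Z ≠ 0 := by rintro rfl; simp at hu
  have hy : y ≠ 0 := by rintro rfl; exact hu (by simpa using hty.symm)
  set u := Z - Z⁻¹
  have hsum : (∑ j ∈ range (m + 1), (lucasCoeff m j : K) * u ^ (2 * j)) * u
      = Z ^ (2 * m + 1) - Z⁻¹ ^ (2 * m + 1) := by
    rw [← sum_lucasCoeff_mul_sub_pow (mul_inv_cancel₀ hZ), sum_mul]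
    exact sum_congr rfl fun j _ => by ring
  rw [← hsum] at hrel
  clear_value u
  have ht : t = u * y := by rw [← hty, div_mul_cancel₀ _ hy]
  have hm : (2 * (m : K) + 1) ≠ 0 := by norm_cast
  have hterm : ∀ j ∈ range (m + 1),
      1 / (2 * (j : K) + 1) * ((j + m).choose (2 * j) : K) * y ^ (2 * m - 2 * j) * t ^ (2 * j)
        = y ^ (2 * m) / (2 * m + 1) * ((lucasCoeff m j : K) * u ^ (2 * j)) := fun j hj => by
    have hjm : j ≤ m := Nat.lt_succ_iff.mp (mem_range.mp hj)
    have hc : (lucasCoeff m j : K) * (2 * j + 1) = (2 * m + 1) * ((j + m).choose (2 * j) : K) := by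
      exact_mod_cast lucasCoeff_mul m j hjm
    have hyt : y ^ (2 * m - 2 * j) * t ^ (2 * j) = y ^ (2 * m) * u ^ (2 * j) := by
      rw [ht, mul_pow, mul_left_comm, ← pow_add, Nat.sub_add_cancel (by omega), mul_comm]
    have hj : (2 * (j : K) + 1) ≠ 0 := by norm_cast
    rw [mul_assoc, hyt]
    field_simp
    linear_combination -hc
  rw [sum_congr rfl hterm, ← mul_sum]
  rw [ht] at hrel
  push_cast at hrel
  apply mul_left_cancel₀ (pow_ne_zero (2 * m + 1) hu)
  linear_combination hrel

section CommRing

variable {R : Type*} [CommRing R]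

noncomputable def evenPoly (r N : ℕ) (c : ℕ → R) : Polynomial R⟦X⟧ :=
  ∑ j ∈ range (N + 1),
    Polynomial.C (C (c j)) * Polynomial.X ^ (r - 2 * j) * Polynomial.C (X ^ (2 * j)) - 1

lemma eval_evenPoly (r N : ℕ) (c : ℕ → R) (y : R⟦X⟧) :
    (evenPoly r N c).eval y
      = ∑ j ∈ range (N + 1), C (c j) * y ^ (r - 2 * j) * X ^ (2 * j) - 1 := by
  simp [evenPoly, Polynomial.eval_finsetSum]

lemma coeff_evenPoly {r : ℕ} (hr : 0 < r) (N : ℕ) (c : ℕ → R) {n : ℕ} (hn : r ≤ n) :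
    (evenPoly r N c).coeff n = if n = r then C (c 0) else 0 := by
  simp only [evenPoly, Polynomial.coeff_sub, Polynomial.finsetSum_coeff, Polynomial.coeff_C_mul,
    Polynomial.coeff_mul_C, Polynomial.coeff_X_pow, Polynomial.coeff_one]
  rw [if_neg (by omega), sub_zero, sum_eq_single 0 (fun j _ hj => by
    rw [if_neg (by omega), mul_zero, zero_mul]) (by simp)]
  split_ifs <;> simp_all

lemma evenPoly_monic {r : ℕ} (hr : 0 < r) (N : ℕ) {c : ℕ → R} (hc : c 0 = 1) :
    (evenPoly r N c).Monic := by
  refine Polynomial.monic_of_natDegree_le_of_coeff_eq_one r ?_ ?_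
  · exact Polynomial.natDegree_le_iff_coeff_eq_zero.2 fun n hn => by
      rw [coeff_evenPoly hr N c (by exact_mod_cast hn.le), if_neg (by rintro rfl; simp at hn)]
  · rw [coeff_evenPoly hr N c le_rfl, if_pos rfl, hc, map_one]

lemma map_constantCoeff_evenPoly {r : ℕ} (N : ℕ) {c : ℕ → R} (hc : c 0 = 1) :
    (evenPoly r N c).map constantCoeff = Polynomial.X ^ r - 1 := by
  simp [evenPoly, Polynomial.map_sum, sum_range_succ', hc]

lemma rescale_C (a c : R) : rescale a (C c) = C c := by
  ext n
  rcases n with _ | n <;> simp [coeff_C]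

lemma map_rescale_evenPoly (r N : ℕ) (c : ℕ → R) :
    (evenPoly r N c).map (rescale (-1)) = evenPoly r N c := by
  simp [evenPoly, Polynomial.map_sum, rescale_C, Even.neg_pow ⟨_, two_mul _⟩]

lemma coeff_sum_C_mul_pow_mul_X_pow {N : ℕ} {c : ℕ → R} (hc : ∀ j, N < j → c j = 0)
    (r n : ℕ) (y : R⟦X⟧) :
    coeff n (∑ j ∈ range (N + 1), C (c j) * y ^ (r - 2 * j) * X ^ (2 * j))
      = ∑ j ∈ range (n / 2 + 1), c j * coeff (n - 2 * j) (y ^ (r - 2 * j)) := by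
  set g : ℕ → R := fun j =>
    if 2 * j ≤ n then c j * coeff (n - 2 * j) (y ^ (r - 2 * j)) else 0
  have hL : ∑ j ∈ range (N + 1), g j = ∑ j ∈ range (N + n + 1), g j :=
    sum_subset (range_subset_range.2 (by omega)) fun j _ hj => by
      simp [g, hc j (by simpa using hj)]
  have hR : ∑ j ∈ range (n / 2 + 1), g j = ∑ j ∈ range (N + n + 1), g j :=
    sum_subset (range_subset_range.2 (by omega)) fun j _ hj => by
      simp only [g, mem_range] at hj ⊢
      rw [if_neg (by omega)]
  rw [map_sum]
  simp_rw [coeff_mul_X_pow', coeff_C_mul]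
  rw [hL, ← hR]
  exact sum_congr rfl fun j hj => if_pos (by simp at hj; omega)

end CommRing

section Field

variable {k : Type*} [Field k]

theorem existsUnique_isRoot_of_constantCoeff {f : Polynomial k⟦X⟧} (hf : f.Monic)
    {a₀ : k⟦X⟧}
    (h₀ : constantCoeff (f.eval a₀) = 0) (h₁ : constantCoeff (f.derivative.eval a₀) ≠ 0) :
    ∃! a : k⟦X⟧, f.IsRoot a ∧ constantCoeff a = constantCoeff a₀ := by
  obtain ⟨a, ha, ha₀⟩ := HenselianRing.is_henselian (I := Ideal.span {X}) f hf a₀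
    (Ideal.mem_span_singleton.2 (X_dvd_iff.2 h₀))
    ((isUnit_iff_constantCoeff.2 (isUnit_iff_ne_zero.2 h₁)).map _)
  have hca : constantCoeff a = constantCoeff a₀ := by
    rwa [← sub_eq_zero, ← map_sub, ← X_dvd_iff, ← Ideal.mem_span_singleton]
  refine ⟨a, ⟨ha, hca⟩, fun b ⟨hb, hcb⟩ =>
    IsLocalRing.eq_of_eval_eq_zero_of_not_isUnit_sub hb ha ?_ ?_⟩
  · rw [isUnit_iff_constantCoeff, map_sub, hcb, hca, sub_self]
    exact not_isUnit_zero
  · rw [isUnit_iff_constantCoeff, ← Polynomial.eval_map_apply, hcb, Polynomial.eval_map_apply]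
    exact isUnit_iff_ne_zero.2 h₁

variable [CharZero k]

theorem existsUnique_isRoot_evenPoly {r : ℕ} (hr : 0 < r) (N : ℕ) {c : ℕ → k}
    (hc : c 0 = 1) :
    ∃! y : k⟦X⟧, (evenPoly r N c).IsRoot y ∧ constantCoeff y = 1 := by
  have h₀ : constantCoeff ((evenPoly r N c).eval 1) = 0 := by
    rw [← map_one constantCoeff, ← Polynomial.eval_map_apply, map_constantCoeff_evenPoly N hc]
    simp
  have h₁ : constantCoeff ((evenPoly r N c).derivative.eval 1) ≠ 0 := by
    rw [← map_one constantCoeff, ← Polynomial.eval_map_apply, ← Polynomial.derivative_map,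
      map_constantCoeff_evenPoly N hc]
    simp [Polynomial.derivative_X_pow, hr.ne']
  simpa using existsUnique_isRoot_of_constantCoeff (evenPoly_monic hr N hc) h₀ h₁

lemma rescale_neg_one_eq_self_iff {f : k⟦X⟧} :
    rescale (-1) f = f ↔ ∀ n, Odd n → coeff n f = 0 := by
  refine ⟨fun h n hn => ?_, fun h => ext fun n => ?_⟩
  · have := congrArg (coeff n) h
    rwa [coeff_rescale, hn.neg_one_pow, neg_one_mul, neg_eq_self] at this
  · rcases n.even_or_odd with hn | hn
    · rw [coeff_rescale, hn.neg_one_pow, one_mul]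
    · rw [coeff_rescale, h n hn, mul_zero]

theorem odd_coeff_eq_zero_of_isRoot_evenPoly {r : ℕ} (hr : 0 < r) {N : ℕ} {c : ℕ → k}
    (hc : c 0 = 1) {y : k⟦X⟧} (hy : (evenPoly r N c).IsRoot y) (hy₀ : constantCoeff y = 1) :
    ∀ n, Odd n → coeff n y = 0 := by
  refine rescale_neg_one_eq_self_iff.1
    ((existsUnique_isRoot_evenPoly hr N hc).unique ⟨?_, ?_⟩ ⟨hy, hy₀⟩)
  · simpa only [map_rescale_evenPoly] using hy.map (f := rescale (-1))
  · rw [← coeff_zero_eq_constantCoeff_apply, coeff_rescale, pow_zero, one_mul,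
      coeff_zero_eq_constantCoeff_apply, hy₀]

lemma coeff_two_four_pow {y : k⟦X⟧} (hy₀ : constantCoeff y = 1)
    (hodd : ∀ n, Odd n → coeff n y = 0) (n : ℕ) :
    coeff 2 (y ^ n) = n * coeff 2 y ∧
      coeff 4 (y ^ n) = n * coeff 4 y + n.choose 2 * coeff 2 y ^ 2 := by
  have hpow : ∀ m, ∀ i, Odd i → coeff i (y ^ m) = 0 := fun m => by
    rw [← rescale_neg_one_eq_self_iff, map_pow, rescale_neg_one_eq_self_iff.2 hodd]
  have h₀ : ∀ m, coeff 0 (y ^ m) = 1 := by simp [hy₀]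
  induction n with
  | zero => simp [coeff_one]
  | succ n ih =>
    have h₁ : coeff 0 y = 1 := by simpa using h₀ 1
    rw [pow_succ y n, coeff_mul, coeff_mul]
    simp only [Finset.Nat.sum_antidiagonal_eq_sum_range_succ_mk, sum_range_succ, sum_range_zero,
      Nat.reduceSub, h₀, h₁, ih.1, ih.2, hodd 1 odd_one, hodd 3 (by decide), hpow n 1 odd_one,
      hpow n 3 (by decide), Nat.choose_succ_succ' n 1, Nat.choose_one_right]
    push_cast
    constructor <;> ring

end Field

theorem existsUnique_isSolD {r : ℕ} (hr : 0 < r) : ∃! y, isSolD r y := by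
  set c : ℕ → ℚ := fun j => ((j + r / 2).choose (2 * j) : ℚ) / (2 * j + 1)
  have hc : c 0 = 1 := by simp [c]
  have key : ∀ y, isSolD r y ↔ (evenPoly r (r / 2) c).IsRoot y ∧ constantCoeff y = 1 := by
    intro y
    rw [Polynomial.IsRoot.def, eval_evenPoly, sub_eq_zero, ← coeff_zero_eq_constantCoeff_apply]
    refine ⟨fun ⟨h₀, _, h⟩ => ⟨h, h₀⟩, fun ⟨h, h₀⟩ => ⟨h₀, ?_, h⟩⟩
    exact odd_coeff_eq_zero_of_isRoot_evenPoly hr hc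
      (by rwa [Polynomial.IsRoot.def, eval_evenPoly, sub_eq_zero]) (by simpa using h₀)
  simpa only [key] using existsUnique_isRoot_evenPoly hr (r / 2) hc

theorem coeff_two_four_of_isSolD {r : ℕ} (hr : 0 < r) (he : Even r) {y : ℚ⟦X⟧}
    (hy : isSolD r y) :
    coeff 2 y = -((r : ℚ) + 2) / 24 ∧
      coeff 4 y = ((r : ℚ) + 2) * ((r : ℚ) - 6) * (2 * (r : ℚ) + 1) / 5760 := by
  obtain ⟨m, rfl⟩ := he.two_dvd
  obtain ⟨h₀, hodd, hsum⟩ := hy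
  rw [Nat.mul_div_cancel_left m two_pos] at hsum
  have hc : ∀ j, m < j → ((j + m).choose (2 * j) : ℚ) / (2 * j + 1) = 0 := fun j hj => by
    rw [Nat.choose_eq_zero_of_lt (by omega), Nat.cast_zero, zero_div]
  have hy₀ : constantCoeff y = 1 := by rwa [← coeff_zero_eq_constantCoeff_apply]
  have hpow := coeff_two_four_pow hy₀ hodd
  have e₂ := congrArg (coeff 2) hsum
  have e₄ := congrArg (coeff 4) hsum
  rw [coeff_sum_C_mul_pow_mul_X_pow hc] at e₂ e₄
  simp only [sum_range_succ, sum_range_zero] at e₂ e₄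
  -- with `a, b` the coefficients of `X², X⁴` and `c₁, c₂` those of the equation, this reads
  -- `2m a + c₁ = 0` and `2m b + binom(2m, 2) a² + (2m - 2) c₁ a + c₂ = 0`
  norm_num [(hpow _).1, (hpow _).2, h₀, hy₀, coeff_one] at e₂ e₄
  have hm : (m : ℚ) ≠ 0 := by exact_mod_cast (by omega : m ≠ 0)
  have hc₂ : ∀ a : ℕ, (a.choose 2 : ℚ) = a * (a - 1) / 2 := Nat.cast_choose_two ℚ
  have hc₄ : ((2 + m).choose 4 : ℚ) = (m + 2) * (m + 1) * m * (m - 1) / 24 := by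
    rw [Nat.cast_choose_eq_descPochhammer_div]
    simp [descPochhammer_succ_right, Nat.factorial]
    ring
  rw [hc₂, hc₂, hc₄, Nat.cast_sub (by omega)] at e₄
  rw [hc₂] at e₂
  push_cast at e₂ e₄ ⊢
  have ha : coeff 2 y = -((m : ℚ) + 1) / 12 :=
    mul_left_cancel₀ hm (by linear_combination e₂ / 2)
  have hb : coeff 4 y = ((m : ℚ) + 1) * (m - 3) * (4 * m + 1) / 1440 :=
    mul_left_cancel₀ hm (by rw [ha] at e₄; linear_combination e₄ / 2)
  constructor
  · linear_combination ha
  · linear_combination hb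

/-- Let `r` be an even positive integer.  If `t, y` are related by `t/y = Z - Z⁻¹` and
`t^r·(Z^{r+1} - Z^{-r-1})/(r+1) = (Z - Z⁻¹)^{r+1}` for an auxiliary (nondegenerate)
variable `Z`, then `y` satisfies
`Σ_{j=0}^{r/2} (1/(2j+1))·binom(j+r/2,2j)·y^{r-2j}·t^{2j} = 1`; moreover this equation
has a unique power series solution `y(t) ∈ 1 + t²ℚ[[t²]]`, beginning
`y(t) = 1 - ((r+2)/24)t² + ((r+2)(r-6)(2r+1)/5760)t⁴ + O(t⁶)`. -/
theorem stmt12 (r : ℕ) (hr : 0 < r) (he : Even r) :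
    (∀ (K : Type) [Field K] [CharZero K], ∀ t y Z : K,
      Z ≠ 0 → Z - Z⁻¹ ≠ 0 →
      t / y = Z - Z⁻¹ →
      t ^ r * (Z ^ (r + 1) - (Z⁻¹) ^ (r + 1)) / ((r : K) + 1) = (Z - Z⁻¹) ^ (r + 1) →
      ∑ j ∈ Finset.range (r / 2 + 1),
          (1 / (2 * (j : K) + 1)) * (Nat.choose (j + r / 2) (2 * j) : K)
            * y ^ (r - 2 * j) * t ^ (2 * j)
        = 1) ∧
    (∃! y : PowerSeries ℚ, isSolD r y) ∧
    ∀ y : PowerSeries ℚ, isSolD r y →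
      PowerSeries.coeff (R := ℚ) 2 y = -((r : ℚ) + 2) / 24 ∧
      PowerSeries.coeff (R := ℚ) 4 y
        = ((r : ℚ) + 2) * ((r : ℚ) - 6) * (2 * (r : ℚ) + 1) / 5760 := by
  refine ⟨fun K _ _ t y Z _ hu hty hrel => ?_, existsUnique_isSolD hr,
    fun y hy => coeff_two_four_of_isSolD hr he hy⟩
  obtain ⟨m, rfl⟩ := he.two_dvd
  rw [Nat.mul_div_cancel_left m two_pos]
  exact sum_choose_mul_pow_mul_pow_eq_one m hu hty hrel
end
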